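/- Let G_A = (A, E_A) be a finite agent graph, H houses, P_a preferences, and φ an injective allocation. Suppose agents a₁, a₂ ∈ A have identical preference sets (P_{a₁} = P_{a₂}) and identical neighborhoods outside themselves (N(a₁) \ {a₂} = N(a₂) \ {a₁}). Let φ' be obtained from φ by swapping the houses of a₁ and a₂. Then the number of envious agents under φ' equals the number of envious agents under φ. -/

import Mathlib

/-!
The transposition of two twins is an automorphism of the agent graph that does not change the
preference map, so it maps the envious agents under `φ ∘ swap` bijectively onto those under `φ`.
-/

namespace SimpleGraph

variable {A H : Type*} (G : SimpleGraph A)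

def IsEnvious (P : A → Set H) (φ : A → H) (a : A) : Prop :=
  φ a ∉ P a ∧ ∃ a', G.Adj a a' ∧ φ a' ∈ P a

lemma isEnvious_comp_iff (σ : G ≃g G) {P : A → Set H} (hP : ∀ a, P (σ a) = P a)
    (φ : A → H) (a : A) : G.IsEnvious P (φ ∘ σ) a ↔ G.IsEnvious P φ (σ a) := by
  unfold IsEnvious
  conv_rhs => rw [hP, σ.surjective.exists]
  simp only [Function.comp_apply, σ.map_adj_iff]

variable {G} {a₁ a₂ : A}

lemma adj_iff_adj_of_neighborSet_sdiff_eq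
    (hN : G.neighborSet a₁ \ {a₂} = G.neighborSet a₂ \ {a₁}) {x : A}
    (hx₁ : x ≠ a₁) (hx₂ : x ≠ a₂) : G.Adj a₁ x ↔ G.Adj a₂ x := by
  simpa [hx₁, hx₂] using Set.ext_iff.mp hN x

variable [DecidableEq A]

lemma adj_swap_iff (hN : G.neighborSet a₁ \ {a₂} = G.neighborSet a₂ \ {a₁}) (a b : A) :
    G.Adj (Equiv.swap a₁ a₂ a) (Equiv.swap a₁ a₂ b) ↔ G.Adj a b := by
  have twin := fun x => adj_iff_adj_of_neighborSet_sdiff_eq hN (x := x)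
  simp only [Equiv.swap_apply_def]
  split_ifs <;> subst_vars <;> grind [G.adj_comm, G.loopless.irrefl]

def Iso.swapOfTwins (hN : G.neighborSet a₁ \ {a₂} = G.neighborSet a₂ \ {a₁}) : G ≃g G :=
  ⟨Equiv.swap a₁ a₂, adj_swap_iff hN _ _⟩

end SimpleGraph

open scoped Classical in
theorem stmt17_general {A H : Type*} [Fintype A] [DecidableEq A]
    (G : SimpleGraph A) (P : A → Set H)
    (φ : A → H)
    (a₁ a₂ : A)
    (hP : P a₁ = P a₂)
    (hN : G.neighborSet a₁ \ {a₂} = G.neighborSet a₂ \ {a₁}) :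
    (Finset.univ.filter (fun a : A =>
        (φ ∘ Equiv.swap a₁ a₂) a ∉ P a ∧
          ∃ a', G.Adj a a' ∧ (φ ∘ Equiv.swap a₁ a₂) a' ∈ P a)).card
      = (Finset.univ.filter (fun a : A =>
          φ a ∉ P a ∧ ∃ a', G.Adj a a' ∧ φ a' ∈ P a)).card := by
  refine Finset.card_equiv (Equiv.swap a₁ a₂) fun a => ?_
  simp only [Finset.mem_filter, Finset.mem_univ, true_and]
  exact G.isEnvious_comp_iff (.swapOfTwins hN) (Equiv.apply_swap_eq_self hP) φ a

open scoped Classical in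
theorem stmt17 {A H : Type*} [Fintype A] [DecidableEq A]
    (G : SimpleGraph A) (P : A → Set H)
    (φ : A → H) (hφ : Function.Injective φ)
    (a₁ a₂ : A)
    (hP : P a₁ = P a₂)
    (hN : G.neighborSet a₁ \ {a₂} = G.neighborSet a₂ \ {a₁}) :
    (Finset.univ.filter (fun a : A =>
        (φ ∘ Equiv.swap a₁ a₂) a ∉ P a ∧
          ∃ a', G.Adj a a' ∧ (φ ∘ Equiv.swap a₁ a₂) a' ∈ P a)).card
      = (Finset.univ.filter (fun a : A =>
          φ a ∉ P a ∧ ∃ a', G.Adj a a' ∧ φ a' ∈ P a)).card :=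
  stmt17_general G P φ a₁ a₂ hP hN
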